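/- arXiv:2507.02446 — 2 statements merged into one kernel-verified Lean document; each statement's English description precedes it below -/
import Mathlib

section
/- Let Λ = ((A,B),(C,D)) be a d×d real matrix in block form with D invertible, and for ε > 0 let Γ^ε = ((A − BD⁻¹C, B),(0, D/ε + D⁻¹CB)) and let E^ε_ℓ = diag(I_ℓ, ε I_{d−ℓ}). Then with T = ((I_ℓ,0),(D⁻¹C, I_{d−ℓ})), one has ‖(1/ε) T (E^ε_{ℓᶜ}) Λ T⁻¹ − Γ^ε‖ = O(1) as ε → 0, where E^ε_{ℓᶜ} = diag(ε I_ℓ, I_{d−ℓ}); in particular the conjugate (1/ε)T E^ε_{ℓᶜ} Λ T⁻¹ agrees with Γ^ε up to a term bounded uniformly in ε. -/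
open scoped Matrix
attribute [local instance] Matrix.linftyOpNormedAddCommGroup Matrix.linftyOpNormedRing Matrix.linftyOpNormedAlgebra

noncomputable section

private lemma fromBlocks_sub' {l' m' n' o' : Type*} (A A' : Matrix n' l' ℝ) (B B' : Matrix n' m' ℝ)
    (C C' : Matrix o' l' ℝ) (D D' : Matrix o' m' ℝ) :
    Matrix.fromBlocks A B C D - Matrix.fromBlocks A' B' C' D' =
      Matrix.fromBlocks (A - A') (B - B') (C - C') (D - D') := by
  simp [sub_eq_add_neg, Matrix.fromBlocks_neg, Matrix.fromBlocks_add]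

theorem stmt6 (ℓ m : ℕ) (A : Matrix (Fin ℓ) (Fin ℓ) ℝ) (B : Matrix (Fin ℓ) (Fin m) ℝ)
    (C : Matrix (Fin m) (Fin ℓ) ℝ) (D : Matrix (Fin m) (Fin m) ℝ) (hD : IsUnit D.det) :
    ∃ K > (0:ℝ), ∃ ε₀ > (0:ℝ), ∀ ε ∈ Set.Ioo (0:ℝ) ε₀,
      ‖ε⁻¹ • (Matrix.fromBlocks (1 : Matrix (Fin ℓ) (Fin ℓ) ℝ) 0 (D⁻¹ * C) 1 *
            (Matrix.fromBlocks (ε • (1 : Matrix (Fin ℓ) (Fin ℓ) ℝ)) 0 0 1 *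
              Matrix.fromBlocks A B C D) *
            Matrix.fromBlocks (1 : Matrix (Fin ℓ) (Fin ℓ) ℝ) 0 (-(D⁻¹ * C)) 1) -
          Matrix.fromBlocks (A - B * D⁻¹ * C) B 0 (ε⁻¹ • D + D⁻¹ * C * B)‖ ≤ K := by
  set N : Matrix (Fin m) (Fin ℓ) ℝ := D⁻¹ * C * A - D⁻¹ * C * B * (D⁻¹ * C) with hN
  have hDD : D * D⁻¹ = 1 := Matrix.mul_nonsing_inv _ hD
  refine ⟨‖Matrix.fromBlocks (0 : Matrix (Fin ℓ) (Fin ℓ) ℝ) 0 N (0 : Matrix (Fin m) (Fin m) ℝ)‖ + 1,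
    lt_add_of_le_of_pos (norm_nonneg _) one_pos, 1, one_pos, ?_⟩
  rintro ε ⟨hε, -⟩
  have hε' : ε ≠ 0 := ne_of_gt hε
  have key : ε⁻¹ • (Matrix.fromBlocks (1 : Matrix (Fin ℓ) (Fin ℓ) ℝ) 0 (D⁻¹ * C) 1 *
            (Matrix.fromBlocks (ε • (1 : Matrix (Fin ℓ) (Fin ℓ) ℝ)) 0 0 1 *
              Matrix.fromBlocks A B C D) *
            Matrix.fromBlocks (1 : Matrix (Fin ℓ) (Fin ℓ) ℝ) 0 (-(D⁻¹ * C)) 1) -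
          Matrix.fromBlocks (A - B * D⁻¹ * C) B 0 (ε⁻¹ • D + D⁻¹ * C * B) =
          Matrix.fromBlocks 0 0 N 0 := by
    rw [Matrix.fromBlocks_multiply, Matrix.fromBlocks_multiply, Matrix.fromBlocks_multiply,
      Matrix.fromBlocks_smul, fromBlocks_sub', Matrix.fromBlocks_inj]
    refine ⟨?_, ?_, ?_, ?_⟩
    · simp only [Matrix.one_mul, Matrix.zero_mul, Matrix.mul_zero, add_zero, zero_add,
        Matrix.mul_one, Matrix.mul_neg, Matrix.smul_mul, smul_add, smul_neg, smul_smul,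
        inv_mul_cancel₀ hε', one_smul]
      rw [Matrix.mul_assoc B]
      abel
    · simp [Matrix.smul_mul, smul_smul, inv_mul_cancel₀ hε']
    · simp only [Matrix.one_mul, Matrix.zero_mul, Matrix.mul_zero, add_zero, zero_add,
        Matrix.mul_one, Matrix.mul_neg, Matrix.smul_mul, Matrix.mul_smul, Matrix.add_mul,
        smul_add, smul_neg, smul_smul, inv_mul_cancel₀ hε', one_smul, hN]
      rw [← Matrix.mul_assoc D D⁻¹ C, hDD, Matrix.one_mul]
      abel
    · simp only [Matrix.one_mul, Matrix.zero_mul, Matrix.mul_zero, add_zero, zero_add,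
        Matrix.mul_one, Matrix.smul_mul, Matrix.mul_smul, smul_add, smul_smul,
        inv_mul_cancel₀ hε', one_smul, ← Matrix.mul_assoc]
      abel
  rw [key]
  linarith
end
end

section
/- Let M be an ℓ×ℓ real matrix with spectral abscissa α(M) < 0, D an m×m real Hurwitz matrix, B an ℓ×m real matrix, and Γ^ε = ((M,B),(0,D/ε)). Then there exists K > 0 such that for every t ≥ 0 and every ε > 0 small enough, ‖e^{tΓ^ε} − diag(e^{tM}, e^{(t/ε)D})‖ ≤ K ε; moreover there exist c' > 0 and η > 0 independent of ε such that ‖e^{tΓ^ε}‖ ≤ c' e^{−ηt} for all t ≥ 0 and all ε > 0 small enough. -/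
open scoped Matrix
attribute [local instance] Matrix.linftyOpNormedAddCommGroup Matrix.linftyOpNormedRing Matrix.linftyOpNormedAlgebra
attribute [local instance] Matrix.linftyOpNormedSpace

noncomputable section

def Hurwitz {n : ℕ} (A : Matrix (Fin n) (Fin n) ℝ) : Prop :=
  ∀ μ ∈ spectrum ℂ (A.map Complex.ofReal), μ.re < 0

open NormedSpace
open scoped ENNReal

lemma nnnorm_map_ofReal {k n : ℕ} (A : Matrix (Fin k) (Fin n) ℝ) :
    ‖A.map Complex.ofReal‖₊ = ‖A‖₊ := by
  rw [Matrix.linfty_opNNNorm_def, Matrix.linfty_opNNNorm_def]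
  congr 1; ext i; congr 1; ext j
  simp [Matrix.map_apply]

lemma norm_map_ofReal {k n : ℕ} (A : Matrix (Fin k) (Fin n) ℝ) :
    ‖A.map Complex.ofReal‖ = ‖A‖ := congrArg NNReal.toReal (nnnorm_map_ofReal A)

lemma map_ofReal_exp {n : ℕ} (A : Matrix (Fin n) (Fin n) ℝ) :
    (exp A).map Complex.ofReal = exp (A.map Complex.ofReal) := by
  have hc : Continuous (fun X : Matrix (Fin n) (Fin n) ℝ => X.map Complex.ofReal) := by
    exact Continuous.matrix_map continuous_id Complex.continuous_ofReal
  have := map_exp (Complex.ofRealHom.mapMatrix (m := Fin n)) ?_ A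
  · exact this
  · exact hc

lemma spectrum_exp_subset {n : ℕ} (A : Matrix (Fin n) (Fin n) ℂ) {μ : ℂ}
    (hμ : μ ∈ spectrum ℂ (exp A)) :
    ∃ lam ∈ spectrum ℂ A, μ = Complex.exp lam := by
  classical
  set f : Module.End ℂ (Fin n → ℂ) := Matrix.toLinAlgEquiv' A with hf
  set g : Module.End ℂ (Fin n → ℂ) := Matrix.toLinAlgEquiv' (exp A) with hgdef
  have hg : Module.End.HasEigenvalue g μ :=
    Module.End.hasEigenvalue_iff_mem_spectrum.mpr (by rwa [AlgEquiv.spectrum_eq])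
  set E := Module.End.eigenspace g μ with hEdef
  have hcomm : Commute f g := ((Commute.refl A).exp_right).map (Matrix.toLinAlgEquiv' (R := ℂ))
  have hE : ∀ x ∈ E, f x ∈ E := by
    intro x hx
    rw [hEdef, Module.End.mem_eigenspace_iff] at hx ⊢
    calc g (f x) = (g * f) x := rfl
    _ = (f * g) x := by rw [hcomm.eq]
    _ = f (g x) := rfl
    _ = μ • f x := by rw [hx, map_smul]
  haveI : Nontrivial E := Submodule.nontrivial_iff_ne_bot.mpr hg
  obtain ⟨lam, hlam⟩ := Module.End.exists_eigenvalue (f.restrict hE)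
  obtain ⟨w, hw⟩ := hlam.exists_hasEigenvector
  have hwne : (w : Fin n → ℂ) ≠ 0 := by
    simpa [Submodule.coe_eq_zero] using hw.2
  have hfw : f (w : Fin n → ℂ) = lam • (w : Fin n → ℂ) := by
    have := Module.End.mem_eigenspace_iff.mp hw.1
    have := congrArg (Subtype.val) this
    simpa using this
  refine ⟨lam, ?_, ?_⟩
  · rw [← AlgEquiv.spectrum_eq (Matrix.toLinAlgEquiv' (R := ℂ)) A,
      ← Module.End.hasEigenvalue_iff_mem_spectrum]
    exact Module.End.hasEigenvalue_of_hasEigenvector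
      ⟨Module.End.mem_eigenspace_iff.mpr hfw, hwne⟩
  · -- key computation : g w = exp lam • w
    have hgw : g (w : Fin n → ℂ) = μ • (w : Fin n → ℂ) :=
      Module.End.mem_eigenspace_iff.mp w.2
    have hpow : ∀ k : ℕ, Matrix.toLinAlgEquiv' (A ^ k) (w : Fin n → ℂ)
        = lam ^ k • (w : Fin n → ℂ) := by
      intro k
      induction k with
      | zero => simp
      | succ k ih =>
        rw [pow_succ, map_mul]
        calc (Matrix.toLinAlgEquiv' (A ^ k) * f) (w : Fin n → ℂ)
            = Matrix.toLinAlgEquiv' (A ^ k) (f (w : Fin n → ℂ)) := rfl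
        _ = lam • (lam ^ k • (w : Fin n → ℂ)) := by rw [hfw, map_smul, ih]
        _ = lam ^ (k+1) • (w : Fin n → ℂ) := by rw [smul_smul, pow_succ, mul_comm]
    set T : Matrix (Fin n) (Fin n) ℂ →ₗ[ℂ] (Fin n → ℂ) :=
      { toFun := fun X => Matrix.toLinAlgEquiv' X (w : Fin n → ℂ)
        map_add' := fun X Y => by rw [map_add, LinearMap.add_apply]
        map_smul' := fun c X => by rw [map_smul, LinearMap.smul_apply, RingHom.id_apply] } with hT
    have hTc : Continuous T := LinearMap.continuous_of_finiteDimensional T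
    have := ContinuousLinearMap.map_tsum ⟨T, hTc⟩ (expSeries_summable' (𝕂 := ℂ) A)
    have key : g (w : Fin n → ℂ) = Complex.exp lam • (w : Fin n → ℂ) := by
      rw [hgdef]
      calc Matrix.toLinAlgEquiv' (exp A) (w : Fin n → ℂ)
          = T (∑' k : ℕ, (k.factorial⁻¹ : ℂ) • A ^ k) := by rw [exp_eq_tsum ℂ]; rfl
      _ = ∑' k : ℕ, T ((k.factorial⁻¹ : ℂ) • A ^ k) := this
      _ = ∑' k : ℕ, ((k.factorial⁻¹ : ℂ) * lam ^ k) • (w : Fin n → ℂ) := by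
            refine tsum_congr fun k => ?_
            rw [hT]
            simp only [LinearMap.coe_mk, AddHom.coe_mk, map_smul]
            rw [hpow k, smul_smul]
      _ = (∑' k : ℕ, (k.factorial⁻¹ : ℂ) * lam ^ k) • (w : Fin n → ℂ) := by
            refine Summable.tsum_smul_const ?_ _
            simpa [smul_eq_mul] using expSeries_summable' (𝕂 := ℂ) lam
      _ = Complex.exp lam • (w : Fin n → ℂ) := by
            rw [Complex.exp_eq_exp_ℂ, exp_eq_tsum ℂ]
            simp [smul_eq_mul]
    rw [key] at hgw
    have : (μ - Complex.exp lam) • (w : Fin n → ℂ) = 0 := by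
      rw [sub_smul, hgw, sub_self]
    rcases smul_eq_zero.mp this with h | h
    · exact (sub_eq_zero.mp h).symm ▸ rfl
    · exact absurd h hwne

lemma hurwitz_decay {n : ℕ} (A : Matrix (Fin n) (Fin n) ℝ) (hA : Hurwitz A) :
    ∃ c > (0:ℝ), ∃ η > (0:ℝ), ∀ t ≥ (0:ℝ), ‖exp (t • A)‖ ≤ c * Real.exp (-η * t) := by
  classical
  set a := exp (A.map Complex.ofReal) with ha
  have hspec : ∀ μ ∈ spectrum ℂ a, ‖μ‖ < 1 := by
    intro μ hμ
    obtain ⟨lam, hlam, rfl⟩ := spectrum_exp_subset _ hμ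
    rw [Complex.norm_exp]
    exact Real.exp_lt_one_iff.mpr (hA lam hlam)
  have hsr : spectralRadius ℂ a < 1 := by
    by_cases hne : (spectrum ℂ a).Nonempty
    · obtain ⟨μ₀, hμ₀, hmax⟩ := (spectrum.isCompact a).exists_isMaxOn hne
        continuous_norm.continuousOn
      calc spectralRadius ℂ a ≤ (‖μ₀‖₊ : ℝ≥0∞) := by
            refine iSup₂_le fun μ hμ => ?_
            exact_mod_cast hmax hμ
      _ < 1 := by
            rw [← ENNReal.coe_one, ENNReal.coe_lt_coe]
            exact_mod_cast hspec μ₀ hμ₀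
    · rw [Set.not_nonempty_iff_eq_empty] at hne
      rw [spectralRadius, hne]
      simp
  obtain ⟨θ', hθ1, hθ2⟩ := exists_between hsr
  have hθ'top : θ' ≠ ⊤ := (hθ2.trans_le le_top).ne
  set θ := θ'.toReal with hθdef
  have hθpos : 0 < θ := ENNReal.toReal_pos (pos_of_gt hθ1).ne' hθ'top
  have hθlt1 : θ < 1 := by
    rw [hθdef, ← ENNReal.toReal_one]
    exact (ENNReal.toReal_lt_toReal hθ'top (by simp)).mpr hθ2
  obtain ⟨N, hN⟩ := Filter.eventually_atTop.mp
    ((spectrum.pow_nnnorm_pow_one_div_tendsto_nhds_spectralRadius a).eventually_lt_const hθ1)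
  have hpowbound : ∀ k : ℕ, k ≥ max N 1 → ‖a ^ k‖ ≤ θ ^ k := by
    intro k hk
    have hk1 : 1 ≤ k := le_trans (le_max_right N 1) hk
    have hkr : ((k:ℝ)) ≠ 0 := by positivity
    have h1 := hN k (le_trans (le_max_left N 1) hk)
    have hx : (‖a ^ k‖₊ : ℝ≥0∞) = ((‖a ^ k‖₊ : ℝ≥0∞) ^ (1 / (k:ℝ))) ^ (k:ℕ) := by
      rw [← ENNReal.rpow_natCast (_ ^ (1 / (k:ℝ))) k, ← ENNReal.rpow_mul,
        one_div, inv_mul_cancel₀ hkr, ENNReal.rpow_one]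
    have h2 : (‖a ^ k‖₊ : ℝ≥0∞) ≤ θ' ^ k := by
      rw [hx]
      exact pow_le_pow_left₀ zero_le h1.le k
    have h3 := ENNReal.toReal_mono (ENNReal.pow_ne_top hθ'top) h2
    simpa [ENNReal.toReal_pow] using h3
  have hmapk : ∀ k : ℕ, ‖(exp A) ^ k‖ = ‖a ^ k‖ := by
    intro k
    rw [← norm_map_ofReal ((exp A) ^ k)]
    congr 1
    have h4 : ((exp A) ^ k).map Complex.ofReal = ((exp A).map Complex.ofReal) ^ k := by
      exact map_pow (Complex.ofRealHom.mapMatrix (m := Fin n)) (exp A) k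
    rw [h4, map_ofReal_exp]
  set η := -Real.log θ with hηdef
  have hη : 0 < η := by
    rw [hηdef, neg_pos]
    exact Real.log_neg hθpos hθlt1
  have hθexp : ∀ k : ℕ, θ ^ k = Real.exp (-η * k) := by
    intro k
    rw [hηdef, neg_neg, mul_comm, Real.exp_nat_mul, Real.exp_log hθpos]
  have hcont : Continuous fun s : ℝ => exp (s • A) :=
    exp_continuous.comp (continuous_id.smul continuous_const)
  set Kn := max N 1 with hKn
  obtain ⟨C₀, hC₀⟩ := (isCompact_Icc (a := (0:ℝ)) (b := (Kn:ℝ) + 1)).exists_bound_of_continuousOn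
    hcont.continuousOn
  have hC₀0 : 0 ≤ C₀ := le_trans (norm_nonneg _) (hC₀ 0 ⟨le_refl 0, by positivity⟩)
  refine ⟨(C₀ + 1) * Real.exp (η * ((Kn:ℝ) + 1)), by positivity, η, hη, fun t ht => ?_⟩
  by_cases hcase : t ≤ (Kn:ℝ)
  · calc ‖exp (t • A)‖ ≤ C₀ := hC₀ t ⟨ht, by linarith⟩
    _ ≤ (C₀ + 1) * Real.exp (η * ((Kn:ℝ) + 1)) * Real.exp (-η * t) := by
        rw [mul_assoc, ← Real.exp_add]
        have hKn1 : (0:ℝ) ≤ (Kn:ℝ) := Nat.cast_nonneg _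
        have h5 : (1:ℝ) ≤ Real.exp (η * ((Kn:ℝ) + 1) + -η * t) := by
          have hnn : (0:ℝ) ≤ η * ((Kn:ℝ) + 1) + -η * t := by nlinarith
          nlinarith [Real.add_one_le_exp (η * ((Kn:ℝ) + 1) + -η * t)]
        nlinarith
  · push_neg at hcase
    set k := ⌊t⌋₊ with hkdef
    have hkK : Kn ≤ k := Nat.le_floor hcase.le
    have hkt : (k:ℝ) ≤ t := Nat.floor_le ht
    have htk1 : t - k < 1 := by
      have := Nat.lt_floor_add_one t
      linarith
    have hsplit : exp (t • A) = exp ((k:ℝ) • A) * exp ((t - (k:ℝ)) • A) := by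
      have h := exp_add_of_commute (((Commute.refl A).smul_left ((k:ℝ))).smul_right (t - (k:ℝ)))
      rw [← add_smul, add_sub_cancel] at h
      exact h
    have hpowk : exp ((k:ℝ) • A) = (exp A) ^ k := by
      rw [Nat.cast_smul_eq_nsmul ℝ k A]; exact exp_nsmul k A
    calc ‖exp (t • A)‖ ≤ ‖exp ((k:ℝ) • A)‖ * ‖exp ((t - (k:ℝ)) • A)‖ := by
          rw [hsplit]; exact norm_mul_le _ _
    _ ≤ (θ ^ k) * C₀ := by
        apply mul_le_mul
        · rw [hpowk, hmapk k]; exact hpowbound k hkK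
        · refine hC₀ _ ⟨by linarith, by linarith [Nat.cast_nonneg (α := ℝ) k]⟩
        · exact norm_nonneg _
        · exact pow_nonneg hθpos.le k
    _ ≤ (C₀ + 1) * Real.exp (η * ((Kn:ℝ) + 1)) * Real.exp (-η * t) := by
        rw [hθexp k]
        have h6 : -η * k ≤ -η * t + η := by nlinarith
        have h7 : Real.exp (-η * (k:ℝ)) ≤ Real.exp η * Real.exp (-η * t) := by
          rw [← Real.exp_add]
          exact Real.exp_le_exp.mpr (by linarith)
        have h8 : Real.exp η ≤ Real.exp (η * ((Kn:ℝ) + 1)) := by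
          apply Real.exp_le_exp.mpr
          have h9 : (0:ℝ) ≤ (Kn:ℝ) := Nat.cast_nonneg _
          nlinarith
        have he1 : 0 < Real.exp (-η * t) := Real.exp_pos _
        have he2 : 0 < Real.exp η := Real.exp_pos _
        calc Real.exp (-η * (k:ℝ)) * C₀ ≤ (Real.exp η * Real.exp (-η * t)) * C₀ :=
              mul_le_mul_of_nonneg_right h7 hC₀0
        _ ≤ (Real.exp (η * ((Kn:ℝ) + 1)) * Real.exp (-η * t)) * (C₀ + 1) := by
              have h10 : Real.exp η * Real.exp (-η * t) ≤
                  Real.exp (η * ((Kn:ℝ) + 1)) * Real.exp (-η * t) :=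
                mul_le_mul_of_nonneg_right h8 he1.le
              have h11 : 0 ≤ Real.exp η * Real.exp (-η * t) := by positivity
              nlinarith
        _ = (C₀ + 1) * Real.exp (η * ((Kn:ℝ) + 1)) * Real.exp (-η * t) := by ring

def tb12 (l m : ℕ) : Matrix (Fin l ⊕ Fin m) (Fin l ⊕ Fin m) ℝ →L[ℝ] Matrix (Fin l) (Fin m) ℝ :=
  LinearMap.toContinuousLinearMap
    { toFun := Matrix.toBlocks₁₂
      map_add' := fun _ _ => rfl
      map_smul' := fun _ _ => rfl }

def tb11 (l m : ℕ) : Matrix (Fin l ⊕ Fin m) (Fin l ⊕ Fin m) ℝ →L[ℝ] Matrix (Fin l) (Fin l) ℝ :=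
  LinearMap.toContinuousLinearMap
    { toFun := Matrix.toBlocks₁₁
      map_add' := fun _ _ => rfl
      map_smul' := fun _ _ => rfl }

def tb21 (l m : ℕ) : Matrix (Fin l ⊕ Fin m) (Fin l ⊕ Fin m) ℝ →L[ℝ] Matrix (Fin m) (Fin l) ℝ :=
  LinearMap.toContinuousLinearMap
    { toFun := Matrix.toBlocks₂₁
      map_add' := fun _ _ => rfl
      map_smul' := fun _ _ => rfl }

def tb22 (l m : ℕ) : Matrix (Fin l ⊕ Fin m) (Fin l ⊕ Fin m) ℝ →L[ℝ] Matrix (Fin m) (Fin m) ℝ :=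
  LinearMap.toContinuousLinearMap
    { toFun := Matrix.toBlocks₂₂
      map_add' := fun _ _ => rfl
      map_smul' := fun _ _ => rfl }

lemma pow_fromBlocks {l m : ℕ} (M : Matrix (Fin l) (Fin l) ℝ) (B : Matrix (Fin l) (Fin m) ℝ)
    (N : Matrix (Fin m) (Fin m) ℝ) (k : ℕ) :
    ∃ C, (Matrix.fromBlocks M B 0 N) ^ k = Matrix.fromBlocks (M ^ k) C 0 (N ^ k) := by
  induction k with
  | zero => exact ⟨0, by rw [pow_zero, pow_zero, pow_zero, Matrix.fromBlocks_one]⟩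
  | succ k ih =>
    obtain ⟨C, hC⟩ := ih
    refine ⟨M ^ k * B + C * N, ?_⟩
    rw [pow_succ, hC, Matrix.fromBlocks_multiply]
    simp [pow_succ]

lemma exp_blocks {l m : ℕ} (M : Matrix (Fin l) (Fin l) ℝ) (B : Matrix (Fin l) (Fin m) ℝ)
    (N : Matrix (Fin m) (Fin m) ℝ) :
    exp (Matrix.fromBlocks M B 0 N) =
      Matrix.fromBlocks (exp M)
        (Matrix.toBlocks₁₂ (exp (Matrix.fromBlocks M B 0 N))) 0 (exp N) := by
  set Γ := Matrix.fromBlocks M B 0 N with hΓ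
  have hsum := expSeries_summable' (𝕂 := ℝ) Γ
  have h11 : Matrix.toBlocks₁₁ (exp Γ) = exp M := by
    have h := ContinuousLinearMap.map_tsum (tb11 l m) hsum
    have : Matrix.toBlocks₁₁ (exp Γ) = ∑' k : ℕ, ((k.factorial : ℝ)⁻¹) • (M ^ k) := by
      rw [exp_eq_tsum ℝ]
      rw [show Matrix.toBlocks₁₁ (∑' k : ℕ, ((k.factorial : ℝ)⁻¹) • Γ ^ k)
        = (tb11 l m) (∑' k : ℕ, ((k.factorial : ℝ)⁻¹) • Γ ^ k) from rfl, h]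
      refine tsum_congr fun k => ?_
      obtain ⟨C, hC⟩ := pow_fromBlocks M B N k
      rw [map_smul]
      congr 1
      rw [show (tb11 l m) (Γ ^ k) = Matrix.toBlocks₁₁ (Γ ^ k) from rfl, hC,
        Matrix.toBlocks_fromBlocks₁₁]
    rw [this, exp_eq_tsum ℝ]
  have h21 : Matrix.toBlocks₂₁ (exp Γ) = 0 := by
    have h := ContinuousLinearMap.map_tsum (tb21 l m) hsum
    have : Matrix.toBlocks₂₁ (exp Γ) = ∑' k : ℕ, (0 : Matrix (Fin m) (Fin l) ℝ) := by
      rw [exp_eq_tsum ℝ]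
      rw [show Matrix.toBlocks₂₁ (∑' k : ℕ, ((k.factorial : ℝ)⁻¹) • Γ ^ k)
        = (tb21 l m) (∑' k : ℕ, ((k.factorial : ℝ)⁻¹) • Γ ^ k) from rfl, h]
      refine tsum_congr fun k => ?_
      obtain ⟨C, hC⟩ := pow_fromBlocks M B N k
      rw [map_smul]
      rw [show (tb21 l m) (Γ ^ k) = Matrix.toBlocks₂₁ (Γ ^ k) from rfl, hC,
        Matrix.toBlocks_fromBlocks₂₁, smul_zero]
    rw [this, tsum_zero]
  have h22 : Matrix.toBlocks₂₂ (exp Γ) = exp N := by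
    have h := ContinuousLinearMap.map_tsum (tb22 l m) hsum
    have : Matrix.toBlocks₂₂ (exp Γ) = ∑' k : ℕ, ((k.factorial : ℝ)⁻¹) • (N ^ k) := by
      rw [exp_eq_tsum ℝ]
      rw [show Matrix.toBlocks₂₂ (∑' k : ℕ, ((k.factorial : ℝ)⁻¹) • Γ ^ k)
        = (tb22 l m) (∑' k : ℕ, ((k.factorial : ℝ)⁻¹) • Γ ^ k) from rfl, h]
      refine tsum_congr fun k => ?_
      obtain ⟨C, hC⟩ := pow_fromBlocks M B N k
      rw [map_smul]
      congr 1
      rw [show (tb22 l m) (Γ ^ k) = Matrix.toBlocks₂₂ (Γ ^ k) from rfl, hC,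
        Matrix.toBlocks_fromBlocks₂₂]
    rw [this, exp_eq_tsum ℝ]
  conv_lhs => rw [← Matrix.fromBlocks_toBlocks (exp Γ), h11, h21, h22]

lemma nnnorm_fromBlocks_le {l m l' m' : ℕ} (A : Matrix (Fin l) (Fin l') ℝ)
    (B : Matrix (Fin l) (Fin m') ℝ) (C : Matrix (Fin m) (Fin l') ℝ)
    (D : Matrix (Fin m) (Fin m') ℝ) :
    ‖Matrix.fromBlocks A B C D‖₊ ≤ max (‖A‖₊ + ‖B‖₊) (‖C‖₊ + ‖D‖₊) := by
  rw [Matrix.linfty_opNNNorm_def]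
  refine Finset.sup_le fun i _ => ?_
  cases i with
  | inl a =>
    refine le_max_of_le_left ?_
    rw [Fintype.sum_sum_type]
    have h1 : ∑ j, ‖Matrix.fromBlocks A B C D (Sum.inl a) (Sum.inl j)‖₊ ≤ ‖A‖₊ := by
      rw [Matrix.linfty_opNNNorm_def]
      exact Finset.le_sup (f := fun i => ∑ j, ‖A i j‖₊) (Finset.mem_univ a)
    have h2 : ∑ j, ‖Matrix.fromBlocks A B C D (Sum.inl a) (Sum.inr j)‖₊ ≤ ‖B‖₊ := by
      rw [Matrix.linfty_opNNNorm_def]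
      exact Finset.le_sup (f := fun i => ∑ j, ‖B i j‖₊) (Finset.mem_univ a)
    exact add_le_add h1 h2
  | inr b =>
    refine le_max_of_le_right ?_
    rw [Fintype.sum_sum_type]
    have h1 : ∑ j, ‖Matrix.fromBlocks A B C D (Sum.inr b) (Sum.inl j)‖₊ ≤ ‖C‖₊ := by
      rw [Matrix.linfty_opNNNorm_def]
      exact Finset.le_sup (f := fun i => ∑ j, ‖C i j‖₊) (Finset.mem_univ b)
    have h2 : ∑ j, ‖Matrix.fromBlocks A B C D (Sum.inr b) (Sum.inr j)‖₊ ≤ ‖D‖₊ := by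
      rw [Matrix.linfty_opNNNorm_def]
      exact Finset.le_sup (f := fun i => ∑ j, ‖D i j‖₊) (Finset.mem_univ b)
    exact add_le_add h1 h2

lemma norm_fromBlocks_le {l m l' m' : ℕ} (A : Matrix (Fin l) (Fin l') ℝ)
    (B : Matrix (Fin l) (Fin m') ℝ) (C : Matrix (Fin m) (Fin l') ℝ)
    (D : Matrix (Fin m) (Fin m') ℝ) :
    ‖Matrix.fromBlocks A B C D‖ ≤ max (‖A‖ + ‖B‖) (‖C‖ + ‖D‖) := by
  have := nnnorm_fromBlocks_le A B C D
  have h2 : (‖Matrix.fromBlocks A B C D‖₊ : ℝ) ≤ ((max (‖A‖₊ + ‖B‖₊) (‖C‖₊ + ‖D‖₊) : NNReal) : ℝ) :=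
    NNReal.coe_le_coe.mpr this
  simpa [NNReal.coe_max] using h2

lemma pow_blockDiag {l m : ℕ} (M : Matrix (Fin l) (Fin l) ℝ) (N : Matrix (Fin m) (Fin m) ℝ)
    (k : ℕ) : (Matrix.fromBlocks M 0 0 N) ^ k = Matrix.fromBlocks (M ^ k) 0 0 (N ^ k) := by
  induction k with
  | zero => rw [pow_zero, pow_zero, pow_zero, Matrix.fromBlocks_one]
  | succ k ih => rw [pow_succ, ih, Matrix.fromBlocks_multiply]; simp [pow_succ]

lemma exp_blockDiag {l m : ℕ} (M : Matrix (Fin l) (Fin l) ℝ) (N : Matrix (Fin m) (Fin m) ℝ) :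
    exp (Matrix.fromBlocks M 0 0 N) = Matrix.fromBlocks (exp M) 0 0 (exp N) := by
  have h12 : Matrix.toBlocks₁₂ (exp (Matrix.fromBlocks M 0 0 N)) = 0 := by
    have hsum := expSeries_summable' (𝕂 := ℝ) (Matrix.fromBlocks M 0 0 N)
    have h := ContinuousLinearMap.map_tsum (tb12 l m) hsum
    rw [exp_eq_tsum ℝ]
    rw [show Matrix.toBlocks₁₂ (∑' k : ℕ, ((k.factorial : ℝ)⁻¹) • (Matrix.fromBlocks M 0 0 N) ^ k)
      = (tb12 l m) (∑' k : ℕ, ((k.factorial : ℝ)⁻¹) • (Matrix.fromBlocks M 0 0 N) ^ k) from rfl, h]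
    rw [show (∑' k : ℕ, (tb12 l m) (((k.factorial : ℝ)⁻¹) • (Matrix.fromBlocks M 0 0 N) ^ k))
        = ∑' _ : ℕ, (0 : Matrix (Fin l) (Fin m) ℝ) from tsum_congr fun k => by
      rw [map_smul, show (tb12 l m) ((Matrix.fromBlocks M 0 0 N) ^ k)
        = Matrix.toBlocks₁₂ ((Matrix.fromBlocks M 0 0 N) ^ k) from rfl, pow_blockDiag,
        Matrix.toBlocks_fromBlocks₁₂, smul_zero]]
    exact tsum_zero
  rw [exp_blocks M 0 N, h12]


set_option maxHeartbeats 1000000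

theorem stmt17 (ℓ m : ℕ) (M : Matrix (Fin ℓ) (Fin ℓ) ℝ) (B : Matrix (Fin ℓ) (Fin m) ℝ)
    (D : Matrix (Fin m) (Fin m) ℝ) (hM : Hurwitz M) (hD : Hurwitz D) :
    ∃ K > (0:ℝ), ∃ c' > (0:ℝ), ∃ η > (0:ℝ), ∃ ε₀ > (0:ℝ), ∀ ε ∈ Set.Ioo (0:ℝ) ε₀,
      ∀ t ≥ (0:ℝ),
        ‖NormedSpace.exp (t • Matrix.fromBlocks M B 0 (ε⁻¹ • D)) -
            Matrix.fromBlocks (NormedSpace.exp (t • M)) 0 0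
              (NormedSpace.exp ((t / ε) • D))‖ ≤ K * ε ∧
        ‖NormedSpace.exp (t • Matrix.fromBlocks M B 0 (ε⁻¹ • D))‖ ≤
          c' * Real.exp (-η * t) := by
  classical
  obtain ⟨c₁, hc₁, η₁, hη₁, hdM⟩ := hurwitz_decay M hM
  obtain ⟨c₂, hc₂, η₂, hη₂, hdD⟩ := hurwitz_decay D hD
  set Cc := (c₁ + c₂) * (‖B‖ * c₂) with hCc
  have hCc0 : 0 ≤ Cc := by positivity
  set K := Cc * (2 / η₂) + 1 with hK
  have hK0 : (0:ℝ) < K := by positivity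
  set η := min η₁ η₂ with hη
  have hη0 : 0 < η := lt_min hη₁ hη₂
  set ε₀ := min 1 (η₂ / (2 * η₁)) with hε₀
  have hε₀0 : 0 < ε₀ := lt_min one_pos (by positivity)
  refine ⟨K, hK0, c₁ + c₂ + K * ε₀, by positivity, η, hη0, ε₀, hε₀0, ?_⟩
  rintro ε ⟨hε0, hεlt⟩ t ht
  have hε1 : ε ≤ 1 := le_trans hεlt.le (min_le_left _ _)
  have hεη : ε < η₂ / (2 * η₁) := lt_of_lt_of_le hεlt (min_le_right _ _)
  have hεpre := (lt_div_iff₀ (show (0:ℝ) < 2 * η₁ by positivity)).mp hεη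
  have hη₁ε : 2 * η₁ < η₂ / ε := by
    rw [lt_div_iff₀ hε0]
    nlinarith
  -- setup
  set N := ε⁻¹ • D with hNdef
  set Γ := Matrix.fromBlocks M B 0 N with hΓ
  set Γ₀ := Matrix.fromBlocks M (0 : Matrix (Fin ℓ) (Fin m) ℝ) 0 N with hΓ₀
  set Bb := Matrix.fromBlocks (0 : Matrix (Fin ℓ) (Fin ℓ) ℝ) B 0
    (0 : Matrix (Fin m) (Fin m) ℝ) with hBb
  have hΓsub : Γ - Γ₀ = Bb := by
    rw [hΓ, hΓ₀, hBb]
    have h5 : Matrix.fromBlocks M B (0 : Matrix (Fin m) (Fin ℓ) ℝ) N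
        = Matrix.fromBlocks M (0 : Matrix (Fin ℓ) (Fin m) ℝ) 0 N
          + Matrix.fromBlocks 0 B 0 0 := by
      rw [Matrix.fromBlocks_add]
      simp
    rw [h5]
    abel
  have hgN : ∀ s : ℝ, exp (s • N) = exp ((s / ε) • D) := by
    intro s; rw [hNdef, smul_smul, div_eq_mul_inv]
  have hdN : ∀ s ≥ (0:ℝ), ‖exp (s • N)‖ ≤ c₂ * Real.exp (-(η₂ / ε) * s) := by
    intro s hs
    rw [hgN s]
    have h := hdD (s / ε) (by positivity)
    have heq : -η₂ * (s / ε) = -(η₂ / ε) * s := by field_simp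
    rwa [heq] at h
  have hsmulΓ : ∀ s : ℝ, s • Γ = Matrix.fromBlocks (s • M) (s • B) 0 (s • N) := by
    intro s; rw [hΓ, Matrix.fromBlocks_smul, smul_zero]
  have hsmulΓ₀ : ∀ s : ℝ, s • Γ₀ = Matrix.fromBlocks (s • M) 0 0 (s • N) := by
    intro s; rw [hΓ₀, Matrix.fromBlocks_smul, smul_zero, smul_zero]
  have hexpΓ₀ : ∀ s : ℝ, exp (s • Γ₀)
      = Matrix.fromBlocks (exp (s • M)) 0 0 (exp (s • N)) := by
    intro s; rw [hsmulΓ₀ s, exp_blockDiag]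
  have hexpΓ : ∀ s : ℝ, exp (s • Γ)
      = Matrix.fromBlocks (exp (s • M)) (Matrix.toBlocks₁₂ (exp (s • Γ))) 0
          (exp (s • N)) := by
    intro s; conv_lhs => rw [hsmulΓ s, exp_blocks]
    rw [← hsmulΓ s]
  -- norm of exp (u • Γ₀) for 0 ≤ u
  have hnΓ₀ : ∀ u ≥ (0:ℝ), ‖exp (u • Γ₀)‖ ≤ (c₁ + c₂) * Real.exp (-η₁ * u) := by
    intro u hu
    rw [hexpΓ₀ u]
    refine le_trans (norm_fromBlocks_le _ _ _ _) ?_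
    simp only [norm_zero, add_zero, zero_add]
    have h1 : ‖exp (u • M)‖ ≤ (c₁ + c₂) * Real.exp (-η₁ * u) := by
      have := hdM u hu
      nlinarith [Real.exp_pos (-η₁ * u)]
    have h2 : ‖exp (u • N)‖ ≤ (c₁ + c₂) * Real.exp (-η₁ * u) := by
      have h3 := hdN u hu
      have h4 : Real.exp (-(η₂ / ε) * u) ≤ Real.exp (-η₁ * u) := by
        apply Real.exp_le_exp.mpr
        nlinarith
      nlinarith [Real.exp_pos (-(η₂ / ε) * u), Real.exp_pos (-η₁ * u)]
    exact max_le h1 h2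
  -- the product Bb * exp (s • Γ)
  have hBbexp : ∀ s : ℝ, Bb * exp (s • Γ)
      = Matrix.fromBlocks 0 (B * exp (s • N)) 0 0 := by
    intro s
    conv_lhs => rw [hBb, hexpΓ s]
    rw [Matrix.fromBlocks_multiply]
    simp
  have hnBbexp : ∀ s ≥ (0:ℝ), ‖Bb * exp (s • Γ)‖
      ≤ ‖B‖ * c₂ * Real.exp (-(η₂ / ε) * s) := by
    intro s hs
    rw [hBbexp s]
    refine le_trans (norm_fromBlocks_le _ _ _ _) ?_
    rw [norm_zero, norm_zero, norm_zero, zero_add, add_zero]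
    have h1 : ‖B * exp (s • N)‖ ≤ ‖B‖ * (c₂ * Real.exp (-(η₂ / ε) * s)) := by
      refine le_trans (Matrix.linfty_opNorm_mul _ _) ?_
      exact mul_le_mul_of_nonneg_left (hdN s hs) (norm_nonneg B)
    refine max_le (by linarith) ?_
    positivity
  -- Duhamel
  have hH : ∀ s : ℝ, HasDerivAt (fun u => exp ((t - u) • Γ₀) * exp (u • Γ))
      (exp ((t - s) • Γ₀) * (Bb * exp (s • Γ))) s := by
    intro s
    have i1 : HasDerivAt (fun u : ℝ => t - u) (-1) s := (hasDerivAt_id s).const_sub t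
    have i2 : HasDerivAt (fun u : ℝ => exp (u • Γ₀)) (Γ₀ * exp ((t - s) • Γ₀)) (t - s) :=
      hasDerivAt_exp_smul_const' Γ₀ (t - s)
    have h1 : HasDerivAt (fun u : ℝ => exp ((t - u) • Γ₀))
        (-(Γ₀ * exp ((t - s) • Γ₀))) s := by
      have := i2.scomp s i1
      simp only [neg_one_smul] at this
      exact this
    have h2 : HasDerivAt (fun u : ℝ => exp (u • Γ)) (Γ * exp (s • Γ)) s :=
      hasDerivAt_exp_smul_const' Γ s
    have h3 := h1.mul h2
    set E₀ := exp ((t - s) • Γ₀) with hE₀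
    set EΓ := exp (s • Γ) with hEΓ
    have hcommΓ₀ : E₀ * Γ₀ = Γ₀ * E₀ :=
      (((Commute.refl Γ₀).smul_left (t - s)).exp_left).eq
    have heq : -(Γ₀ * E₀) * EΓ + E₀ * (Γ * EΓ) = E₀ * (Bb * EΓ) := by
      calc -(Γ₀ * E₀) * EΓ + E₀ * (Γ * EΓ)
          = E₀ * (Γ * EΓ) - (Γ₀ * E₀) * EΓ := by rw [neg_mul]; abel
      _ = E₀ * (Γ * EΓ) - (E₀ * Γ₀) * EΓ := by rw [hcommΓ₀]
      _ = E₀ * (Γ * EΓ) - E₀ * (Γ₀ * EΓ) := by rw [mul_assoc]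
      _ = E₀ * (Γ * EΓ - Γ₀ * EΓ) := by rw [mul_sub]
      _ = E₀ * ((Γ - Γ₀) * EΓ) := by rw [sub_mul]
      _ = E₀ * (Bb * EΓ) := by rw [hΓsub]
    rw [heq] at h3
    exact h3
  have hcontg : Continuous fun s : ℝ => exp ((t - s) • Γ₀) * (Bb * exp (s • Γ)) := by
    have e1 : Continuous fun s : ℝ => exp ((t - s) • Γ₀) :=
      exp_continuous.comp ((continuous_const.sub continuous_id).smul continuous_const)
    have e2 : Continuous fun s : ℝ => exp (s • Γ) :=
      exp_continuous.comp (continuous_id.smul continuous_const)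
    exact e1.mul (continuous_const.mul e2)
  have hFTC := intervalIntegral.integral_eq_sub_of_hasDerivAt
    (f := fun u => exp ((t - u) • Γ₀) * exp (u • Γ))
    (f' := fun s => exp ((t - s) • Γ₀) * (Bb * exp (s • Γ)))
    (fun s _ => hH s) (hcontg.intervalIntegrable 0 t)
  have hdiff : exp (t • Γ) - exp (t • Γ₀)
      = ∫ s in (0:ℝ)..t, exp ((t - s) • Γ₀) * (Bb * exp (s • Γ)) := by
    rw [hFTC]
    congr 1
    · simp [sub_self, exp_zero]
    · simp [exp_zero]
  -- integral bound
  set δ := η₂ / ε - η₁ with hδ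
  have hδ1 : η₂ / (2 * ε) ≤ δ := by
    rw [hδ]
    have h5 : η₂ / (2 * ε) = η₂ / ε / 2 := by
      rw [div_div, mul_comm]
    rw [h5]
    have h6 : η₂ / ε / 2 + η₁ ≤ η₂ / ε := by linarith [hη₁ε]
    linarith
  have hδ0 : 0 < δ := lt_of_lt_of_le (by positivity) hδ1
  have hexpint : ∫ s in (0:ℝ)..t, Real.exp (-δ * s)
      = (1 - Real.exp (-δ * t)) / δ := by
    have hant : ∀ s : ℝ, HasDerivAt (fun u : ℝ => -(1 / δ) * Real.exp (-δ * u))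
        (Real.exp (-δ * s)) s := by
      intro s
      have hinner : HasDerivAt (fun u : ℝ => -δ * u) (-δ) s := by
        simpa using (hasDerivAt_id s).const_mul (-δ)
      have := (hinner.exp).const_mul (-(1 / δ))
      rw [mul_comm (Real.exp _) (-δ), ← mul_assoc, neg_mul_neg, one_div_mul_cancel hδ0.ne', one_mul] at this
      exact this
    have hcont2 : Continuous fun s : ℝ => Real.exp (-δ * s) :=
      Real.continuous_exp.comp (continuous_const.mul continuous_id)
    rw [intervalIntegral.integral_eq_sub_of_hasDerivAt (fun s _ => hant s)
      (hcont2.intervalIntegrable 0 t)]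
    field_simp
    rw [mul_zero, neg_zero, Real.exp_zero]; ring
  have hGint : IntervalIntegrable
      (fun s : ℝ => Cc * Real.exp (-η₁ * t) * Real.exp (-δ * s)) MeasureTheory.volume 0 t := by
    apply Continuous.intervalIntegrable
    exact continuous_const.mul (Real.continuous_exp.comp (continuous_const.mul continuous_id))
  have hptwise : ∀ s ∈ Set.uIoc (0:ℝ) t,
      ‖exp ((t - s) • Γ₀) * (Bb * exp (s • Γ))‖
        ≤ Cc * Real.exp (-η₁ * t) * Real.exp (-δ * s) := by
    intro s hs
    rw [Set.uIoc_of_le ht] at hs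
    obtain ⟨hs0, hst⟩ := hs
    have h1 := hnΓ₀ (t - s) (by linarith)
    have h2 := hnBbexp s hs0.le
    calc ‖exp ((t - s) • Γ₀) * (Bb * exp (s • Γ))‖
        ≤ ‖exp ((t - s) • Γ₀)‖ * ‖Bb * exp (s • Γ)‖ := Matrix.linfty_opNorm_mul _ _
    _ ≤ ((c₁ + c₂) * Real.exp (-η₁ * (t - s))) * (‖B‖ * c₂ * Real.exp (-(η₂ / ε) * s)) := by
        apply mul_le_mul h1 h2 (norm_nonneg _) (by positivity)
    _ = Cc * (Real.exp (-η₁ * (t - s)) * Real.exp (-(η₂ / ε) * s)) := by rw [hCc]; ring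
    _ = Cc * Real.exp (-η₁ * (t - s) + -(η₂ / ε) * s) := by rw [Real.exp_add]
    _ = Cc * Real.exp (-η₁ * t + -δ * s) := by
        rw [hδ]
        congr 2
        ring
    _ = Cc * (Real.exp (-η₁ * t) * Real.exp (-δ * s)) := by rw [Real.exp_add]
    _ = Cc * Real.exp (-η₁ * t) * Real.exp (-δ * s) := by ring
  have hbound : ‖exp (t • Γ) - exp (t • Γ₀)‖
      ≤ Cc * Real.exp (-η₁ * t) * ((1 - Real.exp (-δ * t)) / δ) := by
    rw [hdiff]
    have h7 := intervalIntegral.norm_integral_le_of_norm_le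
      (f := fun s : ℝ => exp ((t - s) • Γ₀) * (Bb * exp (s • Γ)))
      (g := fun s : ℝ => Cc * Real.exp (-η₁ * t) * Real.exp (-δ * s))
      (μ := MeasureTheory.volume)
      ht (by
        filter_upwards with s hs
        exact hptwise s (by rwa [Set.uIoc_of_le ht])) hGint
    refine le_trans h7 ?_
    rw [intervalIntegral.integral_const_mul, hexpint]
  have hIconv : (1 - Real.exp (-δ * t)) / δ ≤ 2 * ε / η₂ := by
    have h8 : Real.exp (-δ * t) ≤ 1 := by
      calc Real.exp (-δ * t) ≤ Real.exp 0 := Real.exp_le_exp.mpr (by nlinarith)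
      _ = 1 := Real.exp_zero
    have h2 : 0 ≤ 1 - Real.exp (-δ * t) := by linarith
    have h3 : 1 / δ ≤ 2 * ε / η₂ := by
      have h31 : 1 / δ ≤ 1 / (η₂ / (2 * ε)) :=
        one_div_le_one_div_of_le (by positivity) hδ1
      rwa [one_div_div] at h31
    calc (1 - Real.exp (-δ * t)) / δ ≤ 1 / δ := by
          have hnum : 1 - Real.exp (-δ * t) ≤ 1 := by linarith [Real.exp_pos (-δ * t)]
          gcongr
    _ ≤ 2 * ε / η₂ := h3
  have hdiffbound : ‖exp (t • Γ) - exp (t • Γ₀)‖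
      ≤ Cc * (2 / η₂) * ε * Real.exp (-η₁ * t) := by
    calc ‖exp (t • Γ) - exp (t • Γ₀)‖
        ≤ Cc * Real.exp (-η₁ * t) * ((1 - Real.exp (-δ * t)) / δ) := hbound
    _ ≤ Cc * Real.exp (-η₁ * t) * (2 * ε / η₂) :=
        mul_le_mul_of_nonneg_left hIconv (by positivity)
    _ = Cc * (2 / η₂) * ε * Real.exp (-η₁ * t) := by ring
  have hE0eq : Matrix.fromBlocks (exp (t • M)) 0 0 (exp ((t / ε) • D))
      = exp (t • Γ₀) := by
    rw [hexpΓ₀ t, hgN t]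
  have hexpeta : Real.exp (-η₁ * t) ≤ Real.exp (-η * t) := by
    apply Real.exp_le_exp.mpr
    have h15 : η ≤ η₁ := min_le_left _ _
    nlinarith [mul_nonneg (sub_nonneg.mpr h15) ht]
  have hexpeta1 : Real.exp (-η₁ * t) ≤ 1 := by
    calc Real.exp (-η₁ * t) ≤ Real.exp 0 := Real.exp_le_exp.mpr (by nlinarith)
    _ = 1 := Real.exp_zero
  constructor
  · rw [hE0eq]
    calc ‖exp (t • Γ) - exp (t • Γ₀)‖
        ≤ Cc * (2 / η₂) * ε * Real.exp (-η₁ * t) := hdiffbound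
    _ ≤ K * ε := by
        rw [hK]
        have h10 : 0 ≤ Cc * (2 / η₂) := by positivity
        have h16 := mul_le_mul_of_nonneg_left hexpeta1 (mul_nonneg h10 hε0.le)
        nlinarith
  · calc ‖exp (t • Γ)‖
        = ‖exp (t • Γ₀) + (exp (t • Γ) - exp (t • Γ₀))‖ := by
          rw [add_sub_cancel]
    _ ≤ ‖exp (t • Γ₀)‖ + ‖exp (t • Γ) - exp (t • Γ₀)‖ := norm_add_le _ _
    _ ≤ (c₁ + c₂) * Real.exp (-η₁ * t) + Cc * (2 / η₂) * ε * Real.exp (-η₁ * t) := by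
        have := hnΓ₀ t ht
        linarith [hdiffbound]
    _ ≤ (c₁ + c₂ + K * ε₀) * Real.exp (-η * t) := by
        have h11 : Cc * (2 / η₂) * ε ≤ K * ε₀ := by
          have h12 : Cc * (2 / η₂) ≤ K := by rw [hK]; linarith
          exact mul_le_mul h12 hεlt.le hε0.le hK0.le
        have h14 : (0:ℝ) ≤ c₁ + c₂ := by positivity
        have h17 := mul_le_mul_of_nonneg_left hexpeta h14
        have h18 : Cc * (2 / η₂) * ε * Real.exp (-η₁ * t) ≤ K * ε₀ * Real.exp (-η * t) :=
          mul_le_mul h11 hexpeta (Real.exp_pos _).le (by positivity)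
        nlinarith
end
end
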